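/- Let Φ be a valued constraint language over a finite domain D containing every unary cost function D → ℝ̄≥0. Suppose for some k ≥ 1 there are a₀,…,a_{2k}, b₀,…,b_{2k} ∈ D with aᵢ ≠ bᵢ for each 0 ≤ i ≤ 2k, and binary cost functions g₀,…,g_{2k} ∈ ⟨Φ⟩_v such that the set of points of finite value of gᵢ is N(aᵢ,bᵢ,a_{i+1},b_{i+1}) for each 0 ≤ i ≤ 2k−1, and the set of points of finite value of g_{2k} is N(a_{2k},b_{2k},a₀,b₀). Then Φ is not weakly submodular. -/

import Mathlib

open scoped NNRat ENNReal

/-- A cost function of some arity over domain `D`, taking values in `ℝ≥0 ∪ {∞}`. -/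
abbrev CFun (D : Type) : Type := Σ k : ℕ, (Fin k → D) → ℝ≥0∞

/-- The binary crisp equality cost function. -/
noncomputable def eqC (D : Type) [DecidableEq D] : (Fin 2 → D) → ℝ≥0∞ :=
  fun x => if x 0 = x 1 then 0 else ⊤

/-- `f` is definable by a psm-formula over `Φ ∪ {eq}`: a minimisation over `k`
bound variables of a sum of `m` atomic formulas. -/
def InVClone {D : Type} [Fintype D] [DecidableEq D] (Φ : Set (CFun D)) {n : ℕ}
    (f : (Fin n → D) → ℝ≥0∞) : Prop :=
  ∃ (k m : ℕ) (ar : Fin m → ℕ) (g : ∀ j : Fin m, (Fin (ar j) → D) → ℝ≥0∞)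
    (sc : ∀ j : Fin m, Fin (ar j) → Fin (n + k)),
    (∀ j : Fin m, (⟨ar j, g j⟩ : CFun D) ∈ Φ ∨ (⟨ar j, g j⟩ : CFun D) = ⟨2, eqC D⟩) ∧
    ∀ x : Fin n → D, f x = ⨅ y : Fin k → D, ∑ j : Fin m, g j (fun i => Fin.append x y (sc j i))

/-- Weak submodularity of a valued constraint language. -/
def WeaklySubmodular {D : Type} [Fintype D] [DecidableEq D] (Φ : Set (CFun D)) : Prop :=
  ∀ f : (Fin 2 → D) → ℝ≥0∞, InVClone Φ f → ∀ a b : D,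
    f ![a, a] + f ![b, b] ≤ f ![a, b] + f ![b, a] ∨ (f ![a, a] = ⊤ ∧ f ![b, b] = ⊤)

/-!
Chain the `gᵢ` along a path with positions `0, …, n`, where `n = 2k + 1` and position `p` is
labelled by `a_(p mod n)` and `b_(p mod n)`, and charge a unary penalty `W` at every position whose
value differs from its `b`-label. Since `gᵢ(bᵢ, bᵢ₊₁) = ∞`, no two adjacent positions of a
finite-cost walk carry their `b`-label; on a path of odd length this forces
`F(a₀, a₀) ≥ (k + 2) W` and `F(b₀, b₀) ≥ (k + 1) W` for the resulting binary function `F`. The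
zigzag walks `a₀ b₁ a₂ … b₀` and `b₀ a₁ b₂ … a₀` together pay the `2k + 2` penalties once and
`S = ∑ᵢ gᵢ(aᵢ, bᵢ₊₁) + gᵢ(bᵢ, aᵢ₊₁) < ∞` on their edges, so `W = S + 1` violates weak
submodularity at `(a₀, b₀)`; the walk `a₀ a₁ … a₀` keeps `F(a₀, a₀)` finite.
-/

theorem iInf_pi_sum_eq_sum_iInf {A : Type} [Fintype A] {β : A → Type} [∀ j, Nonempty (β j)]
    (g : ∀ j, β j → ℝ≥0∞) : ⨅ Z : ∀ j, β j, ∑ j, g j (Z j) = ∑ j, ⨅ z, g j z := by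
  classical
  rw [ENNReal.iInf_sum fun _ Z Z' => ⟨fun j => if g j (Z j) ≤ g j (Z' j) then Z j else Z' j,
    fun j _ => by dsimp only; split_ifs with h <;> simp [h, le_of_not_ge]⟩]
  exact Finset.sum_congr rfl fun j _ => (Function.surjective_eval j).iInf_comp (g j)

namespace InVClone

variable {D : Type} [Fintype D] [DecidableEq D] {Φ : Set (CFun D)} {n : ℕ}

theorem of_psm_atoms {f : (Fin n → D) → ℝ≥0∞} {V A : Type} [Fintype V] [Fintype A]
    (ar : A → ℕ) (h : ∀ j, (Fin (ar j) → D) → ℝ≥0∞) (sc : ∀ j, Fin (ar j) → Fin n ⊕ V)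
    (hh : ∀ j, (⟨ar j, h j⟩ : CFun D) ∈ Φ ∨ (⟨ar j, h j⟩ : CFun D) = ⟨2, eqC D⟩)
    (hf : ∀ x, f x = ⨅ v : V → D, ∑ j, h j fun t => Sum.elim x v (sc j t)) :
    InVClone Φ f := by
  let eV := Fintype.equivFin V
  let eA := (Fintype.equivFin A).symm
  refine ⟨_, _, ar ∘ eA, fun j => h (eA j),
    fun j t => finSumFinEquiv (Sum.map id eV (sc (eA j) t)), fun j => hh (eA j), fun x => ?_⟩
  rw [hf, ← (Equiv.arrowCongr eV (Equiv.refl D)).symm.iInf_comp]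
  refine iInf_congr fun y => (Equiv.sum_comp eA _).symm.trans (Finset.sum_congr rfl fun j _ => ?_)
  congr 1
  funext t
  dsimp only
  rcases sc (eA j) t with i | v <;> simp [Equiv.arrowCongr]

theorem of_atom {m : ℕ} {f : (Fin m → D) → ℝ≥0∞}
    (hf : (⟨m, f⟩ : CFun D) ∈ Φ ∨ (⟨m, f⟩ : CFun D) = ⟨2, eqC D⟩) : InVClone Φ f :=
  of_psm_atoms (V := Empty) (A := Unit) (fun _ => m) (fun _ => f) (fun _ => Sum.inl)
    (fun _ => hf) fun x => by simp

theorem of_psm [Nonempty D] {f : (Fin n → D) → ℝ≥0∞} {V A : Type} [Fintype V] [Fintype A]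
    (ar : A → ℕ) (h : ∀ j, (Fin (ar j) → D) → ℝ≥0∞) (sc : ∀ j, Fin (ar j) → Fin n ⊕ V)
    (hh : ∀ j, InVClone Φ (h j))
    (hf : ∀ x, f x = ⨅ v : V → D, ∑ j, h j fun t => Sum.elim x v (sc j t)) :
    InVClone Φ f := by
  choose k m ar' h' sc' hatom hval using hh
  -- the bound variable `r` of the formula for `h j` becomes the bound variable `⟨j, r⟩`
  refine of_psm_atoms (V := V ⊕ Σ j, Fin (k j)) (A := Σ j, Fin (m j))
    (fun q => ar' q.1 q.2) (fun q => h' q.1 q.2)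
    (fun q s => Sum.elim (fun r => Sum.map id Sum.inl (sc q.1 r))
      (fun r => Sum.inr (Sum.inr ⟨q.1, r⟩)) (finSumFinEquiv.symm (sc' q.1 q.2 s)))
    (fun q => hatom q.1 q.2) fun x => ?_
  have hsplit : ∀ F : ((V ⊕ Σ j, Fin (k j)) → D) → ℝ≥0∞,
      ⨅ v', F v' = ⨅ (v : V → D) (Z : ∀ j, Fin (k j) → D), F (Sum.elim v fun r => Z r.1 r.2) := by
    intro F
    rw [← (Equiv.sumArrowEquivProdArrow _ _ D).symm.iInf_comp, iInf_prod]
    exact iInf_congr fun v => ((Equiv.piCurry fun _ _ => D).symm.iInf_comp).symm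
  rw [hf, hsplit]
  refine iInf_congr fun v => ?_
  rw [Finset.sum_congr rfl fun j _ => hval j _, ← iInf_pi_sum_eq_sum_iInf]
  refine iInf_congr fun Z => Eq.trans ?_ (Fintype.sum_sigma _).symm
  refine Finset.sum_congr rfl fun j _ => Finset.sum_congr rfl fun t _ =>
    congrArg _ (funext fun s => ?_)
  obtain ⟨r, hr⟩ := finSumFinEquiv.surjective (sc' j t s)
  rw [← hr, Equiv.symm_apply_apply]
  rcases r with r | r
  · simp only [finSumFinEquiv_apply_left, Fin.append_left, Sum.elim_inl]
    rcases sc j r <;> rfl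
  · simp

end InVClone

section Walks

variable {D : Type} {n : ℕ}

noncomputable def walkCost (g : Fin n → (Fin 2 → D) → ℝ≥0∞) (u : Fin (n + 1) → D → ℝ≥0∞)
    (w : Fin (n + 1) → D) : ℝ≥0∞ :=
  (∑ i, g i ![w i.castSucc, w i.succ]) + ∑ p, u p (w p)

noncomputable def chainCost (g : Fin n → (Fin 2 → D) → ℝ≥0∞) (u : Fin (n + 1) → D → ℝ≥0∞)
    (x : Fin 2 → D) : ℝ≥0∞ :=
  ⨅ (w : Fin (n + 1) → D) (_ : w 0 = x 0 ∧ w (Fin.last n) = x 1), walkCost g u w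

theorem InVClone.chainCost [Fintype D] [DecidableEq D] [Nonempty D] {Φ : Set (CFun D)}
    {g : Fin n → (Fin 2 → D) → ℝ≥0∞} {u : Fin (n + 1) → D → ℝ≥0∞} (hg : ∀ i, InVClone Φ (g i))
    (hu : ∀ p, InVClone Φ fun y : Fin 1 → D => u p (y 0)) : InVClone Φ (chainCost g u) := by
  -- atoms: `eq` tying the ends of the walk to `x 0` and `x 1`, the edges `g i`, the vertices `u p`
  refine InVClone.of_psm (V := Fin (n + 1)) (A := Fin 2 ⊕ Fin n ⊕ Fin (n + 1))
    (Sum.elim (fun _ => 2) (Sum.elim (fun _ => 2) fun _ => 1))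
    (fun | .inl _ => eqC D | .inr (.inl i) => g i | .inr (.inr p) => fun y : Fin 1 → D => u p (y 0))
    (fun | .inl e => ![.inr (![0, Fin.last n] e), .inl e]
         | .inr (.inl i) => ![.inr i.castSucc, .inr i.succ]
         | .inr (.inr p) => fun _ => .inr p)
    (fun | .inl _ => .of_atom (.inr rfl) | .inr (.inl i) => hg i | .inr (.inr p) => hu p)
    fun x => iInf_congr fun w => ?_
  have hedge (i : Fin n) :
      (fun t => Sum.elim x w (![.inr i.castSucc, .inr i.succ] t)) = ![w i.castSucc, w i.succ] := by
    ext t; fin_cases t <;> rfl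
  simp only [walkCost, iInf_eq_if, Fintype.sum_sum_type, Fin.sum_univ_two, eqC, hedge,
    Matrix.cons_val_zero, Matrix.cons_val_one, Matrix.cons_val_fin_one, Sum.elim_inl, Sum.elim_inr,
    eq_comm]
  split_ifs <;> simp_all

def NoAdjacentAgreement (w c : Fin (n + 1) → D) : Prop :=
  ∀ i : Fin n, w i.castSucc = c i.castSucc → w i.succ ≠ c i.succ

end Walks

lemma two_mul_card_le_of_add_one_notMem {s : Finset ℕ} {l r : ℕ} (hs : s ⊆ Finset.Ico l r)
    (h : ∀ p ∈ s, p + 1 ∉ s) : 2 * s.card ≤ r - l + 1 := by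
  -- `p ↦ (p - l) / 2` identifies only adjacent numbers
  have : s.card ≤ (Finset.range ((r - l + 1) / 2)).card := by
    refine Finset.card_le_card_of_injOn (fun p => (p - l) / 2) (fun p hp => ?_)
      fun p hp q hq hpq => ?_
    · have := Finset.mem_Ico.mp (hs hp)
      simp only [Finset.coe_range, Set.mem_Iio]
      omega
    · have := Finset.mem_Ico.mp (hs hp)
      have := Finset.mem_Ico.mp (hs hq)
      simp only at hpq
      by_contra hne
      rcases (by omega : q = p + 1 ∨ p = q + 1) with rfl | rfl
      · exact h p hp hq
      · exact h q hq hp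
  rw [Finset.card_range] at this
  omega

section Hamming

variable {D : Type} [DecidableEq D] {n : ℕ} {w c : Fin (n + 1) → D}

lemma two_mul_le_two_mul_hammingDist_add (hadj : NoAdjacentAgreement w c) {l r : ℕ}
    (hlr : ∀ p, w p = c p → l ≤ (p : ℕ) ∧ (p : ℕ) < r) :
    2 * (n + 1) ≤ 2 * hammingDist w c + (r - l + 1) := by
  set s := (Finset.univ.filter fun p => w p = c p).map Fin.valEmbedding
  have hcard : s.card + hammingDist w c = n + 1 := by
    rw [Finset.card_map, hammingDist, Finset.card_filter_add_card_filter_not, Finset.card_univ,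
      Fintype.card_fin]
  have hs : 2 * s.card ≤ r - l + 1 := by
    refine two_mul_card_le_of_add_one_notMem (fun p hp => ?_) fun p hp hp1 => ?_
    · obtain ⟨q, hq, rfl⟩ := Finset.mem_map.mp hp
      exact Finset.mem_Ico.mpr (hlr q (Finset.mem_filter.mp hq).2)
    · obtain ⟨q, hq, rfl⟩ := Finset.mem_map.mp hp
      obtain ⟨q', hq', hqq'⟩ := Finset.mem_map.mp hp1
      have hqn : (q : ℕ) < n := by rw [Fin.valEmbedding_apply] at hqq'; omega
      have hsucc : (⟨q, hqn⟩ : Fin n).succ = q' := Fin.ext (by simp_all)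
      exact hadj ⟨q, hqn⟩ (Finset.mem_filter.mp hq).2 (hsucc ▸ (Finset.mem_filter.mp hq').2)
  omega

lemma le_two_mul_hammingDist (hadj : NoAdjacentAgreement w c) : n ≤ 2 * hammingDist w c := by
  have := two_mul_le_two_mul_hammingDist_add hadj (l := 0) (r := n + 1)
    fun p _ => ⟨p.zero_le, p.isLt⟩
  omega

lemma add_two_le_two_mul_hammingDist (hadj : NoAdjacentAgreement w c) (h0 : w 0 ≠ c 0)
    (hl : w (Fin.last n) ≠ c (Fin.last n)) : n + 2 ≤ 2 * hammingDist w c := by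
  have := two_mul_le_two_mul_hammingDist_add hadj (l := 1) (r := n) fun p hp => by
    have := Fin.pos_of_ne_zero fun h : p = 0 => h0 (h ▸ hp)
    have := Fin.val_lt_last fun h : p = Fin.last n => hl (h ▸ hp)
    omega
  omega

end Hamming

section Cycle

open Fin.NatCast

variable {D : Type} {n : ℕ} [NeZero n]

/-- Position `p` of a path around the cycle `Fin n` carries the label of `p mod n`, so both ends
carry `a 0`. -/
def unroll (a : Fin n → D) (p : Fin (n + 1)) : D := a (p : ℕ)

@[simp] lemma unroll_castSucc (a : Fin n → D) (i : Fin n) : unroll a i.castSucc = a i := by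
  simp [unroll]

@[simp] lemma unroll_succ (a : Fin n → D) (i : Fin n) : unroll a i.succ = a (i + 1) := by
  simp [unroll]

@[simp] lemma unroll_zero (a : Fin n → D) : unroll a 0 = a 0 := by
  simp [unroll]

@[simp] lemma unroll_last (a : Fin n → D) : unroll a (Fin.last n) = a 0 := by
  simp [unroll]

lemma chainCost_ne_top {g : Fin n → (Fin 2 → D) → ℝ≥0∞} {u : Fin (n + 1) → D → ℝ≥0∞}
    {a : Fin n → D} (haa : ∀ i, g i ![a i, a (i + 1)] ≠ ⊤) (hu : ∀ p d, u p d ≠ ⊤) :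
    chainCost g u ![a 0, a 0] ≠ ⊤ :=
  ne_top_of_le_ne_top (by simp [walkCost, ENNReal.sum_eq_top, haa, hu])
    (iInf₂_le (unroll a) (by simp))

def zigzag (a b : Fin n → D) (p : Fin (n + 1)) : D :=
  if Even (p : ℕ) then unroll a p else unroll b p

@[simp] lemma zigzag_zero (a b : Fin n → D) : zigzag a b 0 = a 0 := by
  simp [zigzag]

lemma zigzag_last (hn : Odd n) (a b : Fin n → D) : zigzag a b (Fin.last n) = b 0 := by
  simp [zigzag, Nat.not_even_iff_odd.mpr hn]

lemma add_apply_zigzag {M : Type} [AddCommMonoid M] (φ : D → M) (a b : Fin n → D)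
    (p : Fin (n + 1)) :
    φ (zigzag a b p) + φ (zigzag b a p) = φ (unroll a p) + φ (unroll b p) := by
  unfold zigzag
  split_ifs
  · rfl
  · exact add_comm _ _

lemma add_apply_zigzag_edge {M : Type} [AddCommMonoid M] (φ : (Fin 2 → D) → M)
    (a b : Fin n → D) (i : Fin n) :
    φ ![zigzag a b i.castSucc, zigzag a b i.succ] + φ ![zigzag b a i.castSucc, zigzag b a i.succ] =
      φ ![a i, b (i + 1)] + φ ![b i, a (i + 1)] := by
  rcases Nat.even_or_odd i with hi | hi
  · simp [zigzag, hi, Nat.even_add_one]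
  · simp [zigzag, Nat.not_even_iff_odd.mpr hi, Nat.even_add_one, add_comm]

lemma walkCost_zigzag_add_walkCost_zigzag (g : Fin n → (Fin 2 → D) → ℝ≥0∞)
    (u : Fin (n + 1) → D → ℝ≥0∞) (a b : Fin n → D) :
    walkCost g u (zigzag a b) + walkCost g u (zigzag b a) =
      (∑ i, (g i ![a i, b (i + 1)] + g i ![b i, a (i + 1)])) +
        ∑ p, (u p (unroll a p) + u p (unroll b p)) := by
  simp only [walkCost, add_add_add_comm, ← Finset.sum_add_distrib, add_apply_zigzag,
    add_apply_zigzag_edge]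

lemma chainCost_add_chainCost_le (hn : Odd n) (g : Fin n → (Fin 2 → D) → ℝ≥0∞)
    (u : Fin (n + 1) → D → ℝ≥0∞) (a b : Fin n → D) :
    chainCost g u ![a 0, b 0] + chainCost g u ![b 0, a 0] ≤
      (∑ i, (g i ![a i, b (i + 1)] + g i ![b i, a (i + 1)])) +
        ∑ p, (u p (unroll a p) + u p (unroll b p)) :=
  (add_le_add (iInf₂_le _ (by simp [zigzag_last hn]))
    (iInf₂_le _ (by simp [zigzag_last hn]))).trans_eq (walkCost_zigzag_add_walkCost_zigzag g u a b)

variable [DecidableEq D]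

noncomputable def offLabelCost (b : Fin n → D) (W : ℝ≥0∞) (p : Fin (n + 1)) (d : D) : ℝ≥0∞ :=
  if d = unroll b p then 0 else W

lemma offLabelCost_ne_top (b : Fin n → D) {W : ℝ≥0∞} (hW : W ≠ ⊤) (p : Fin (n + 1)) (d : D) :
    offLabelCost b W p d ≠ ⊤ := by
  unfold offLabelCost; split_ifs <;> simp [hW]

lemma sum_offLabelCost (b : Fin n → D) (W : ℝ≥0∞) (w : Fin (n + 1) → D) :
    ∑ p, offLabelCost b W p (w p) = hammingDist w (unroll b) * W := by
  simp [offLabelCost, Finset.sum_ite, hammingDist]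

lemma chainCost_offLabelCost_add_le (hn : Odd n) (g : Fin n → (Fin 2 → D) → ℝ≥0∞)
    (a b : Fin n → D) (W : ℝ≥0∞) :
    chainCost g (offLabelCost b W) ![a 0, b 0] + chainCost g (offLabelCost b W) ![b 0, a 0] ≤
      (∑ i, (g i ![a i, b (i + 1)] + g i ![b i, a (i + 1)])) + (n + 1) * W := by
  refine (chainCost_add_chainCost_le hn g _ a b).trans (add_le_add_right ?_ _)
  rw [Finset.sum_add_distrib, sum_offLabelCost, sum_offLabelCost, hammingDist_self,
    Nat.cast_zero, zero_mul, add_zero]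
  gcongr
  exact_mod_cast hammingDist_le_card_fintype.trans_eq (Fintype.card_fin _)

lemma mul_le_chainCost {g : Fin n → (Fin 2 → D) → ℝ≥0∞} {b : Fin n → D} (W : ℝ≥0∞)
    (hbb : ∀ i, g i ![b i, b (i + 1)] = ⊤) {x : Fin 2 → D} {m : ℕ}
    (hm : ∀ w : Fin (n + 1) → D, w 0 = x 0 → w (Fin.last n) = x 1 →
      NoAdjacentAgreement w (unroll b) → m ≤ hammingDist w (unroll b)) :
    m * W ≤ chainCost g (offLabelCost b W) x := by
  refine le_iInf₂ fun w ⟨h0, hl⟩ => ?_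
  by_cases htop : walkCost g (offLabelCost b W) w = ⊤
  · exact htop ▸ le_top
  have hadj : NoAdjacentAgreement w (unroll b) := fun i hi hi' => by
    refine htop (ENNReal.add_eq_top.mpr (.inl (ENNReal.sum_eq_top.mpr ⟨i, Finset.mem_univ _, ?_⟩)))
    simp_all
  calc (m : ℝ≥0∞) * W ≤ hammingDist w (unroll b) * W := by gcongr; exact hm w h0 hl hadj
    _ ≤ walkCost g (offLabelCost b W) w := by rw [walkCost, sum_offLabelCost]; exact le_add_self

lemma add_two_mul_le_chainCost_add_chainCost (hn : Odd n) {g : Fin n → (Fin 2 → D) → ℝ≥0∞}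
    {a b : Fin n → D} (W : ℝ≥0∞) (hbb : ∀ i, g i ![b i, b (i + 1)] = ⊤) (hab : a 0 ≠ b 0) :
    (n + 2) * W ≤ chainCost g (offLabelCost b W) ![a 0, a 0] +
      chainCost g (offLabelCost b W) ![b 0, b 0] := by
  obtain ⟨k, rfl⟩ := hn
  have h_aa : ((k + 2 : ℕ) : ℝ≥0∞) * W ≤ chainCost g (offLabelCost b W) ![a 0, a 0] :=
    mul_le_chainCost W hbb fun w h0 hl hadj => by
      have := add_two_le_two_mul_hammingDist hadj (by simp_all) (by simp_all)
      omega
  have h_bb : ((k + 1 : ℕ) : ℝ≥0∞) * W ≤ chainCost g (offLabelCost b W) ![b 0, b 0] :=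
    mul_le_chainCost W hbb fun w _ _ hadj => by
      have := le_two_mul_hammingDist hadj
      omega
  calc ((2 * k + 1 : ℕ) + 2 : ℝ≥0∞) * W
      = ((k + 2 : ℕ) : ℝ≥0∞) * W + ((k + 1 : ℕ) : ℝ≥0∞) * W := by push_cast; ring
    _ ≤ _ := add_le_add h_aa h_bb

end Cycle

lemma not_add_two_mul_le {m : ℕ} {S : ℝ≥0∞} (hS : S ≠ ⊤) :
    ¬ ((m : ℝ≥0∞) + 2) * (S + 1) ≤ S + (m + 1) * (S + 1) := by
  rw [show (m : ℝ≥0∞) + 2 = m + 1 + 1 by ring, add_one_mul, add_comm S ((m + 1) * _),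
    ENNReal.add_le_add_iff_left (ENNReal.mul_ne_top (by simp) (by simp [hS]))]
  exact (ENNReal.lt_add_right hS one_ne_zero).not_ge

theorem not_weaklySubmodular_of_oddCycle_general
    {D : Type} [Fintype D] [DecidableEq D]
    (Φ : Set (CFun D))
    (hcons : ∀ u : D → ℝ≥0∞, (⟨1, fun x => u (x 0)⟩ : CFun D) ∈ Φ)
    (k : ℕ)
    (a b : Fin (2 * k + 1) → D) (hab : ∀ i, a i ≠ b i)
    (g : Fin (2 * k + 1) → (Fin 2 → D) → ℝ≥0∞)
    (hg : ∀ i, InVClone Φ (g i))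
    (hfin : ∀ i : Fin (2 * k + 1), {x : Fin 2 → D | g i x ≠ ⊤} =
      {![a i, a (i + 1)], ![b i, a (i + 1)], ![a i, b (i + 1)]}) :
    ¬ WeaklySubmodular Φ := by
  intro hWS
  have : Nonempty D := ⟨a 0⟩
  have hN (i : Fin (2 * k + 1)) (x : Fin 2 → D) : g i x ≠ ⊤ ↔
      x = ![a i, a (i + 1)] ∨ x = ![b i, a (i + 1)] ∨ x = ![a i, b (i + 1)] :=
    Set.ext_iff.mp (hfin i) x
  have hbb (i : Fin (2 * k + 1)) : g i ![b i, b (i + 1)] = ⊤ := by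
    by_contra h
    rcases (hN i _).mp h with h | h | h
    · exact hab i (congrFun h 0).symm
    · exact hab (i + 1) (congrFun h 1).symm
    · exact hab i (congrFun h 0).symm
  set S := ∑ i, (g i ![a i, b (i + 1)] + g i ![b i, a (i + 1)])
  have hS : S ≠ ⊤ := by simp [S, ENNReal.sum_eq_top, hN]
  set F := chainCost g (offLabelCost b (S + 1))
  have hF : InVClone Φ F := InVClone.chainCost hg fun p => .of_atom (.inl (hcons _))
  have hodd : Odd (2 * k + 1) := odd_two_mul_add_one k
  rcases hWS F hF (a 0) (b 0) with h | h
  · exact not_add_two_mul_le hS <| (add_two_mul_le_chainCost_add_chainCost hodd _ hbb (hab 0)).trans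
      (h.trans (chainCost_offLabelCost_add_le hodd g a b (S + 1)))
  · exact chainCost_ne_top (fun i => (hN i _).mpr (.inl rfl)) (offLabelCost_ne_top b (by simp [hS]))
      h.1

/-- If `Φ` contains every unary cost function and, for some
`k ≥ 1`, its valued clone contains binary cost functions `g₀, …, g_{2k}` whose
points of finite value are, cyclically, the relations
`N(aᵢ, bᵢ, a_{i+1}, b_{i+1}) = {(aᵢ, a_{i+1}), (bᵢ, a_{i+1}), (aᵢ, b_{i+1})}`
with `aᵢ ≠ bᵢ`, then `Φ` is not weakly submodular. -/
theorem not_weaklySubmodular_of_oddCycle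
    {D : Type} [Fintype D] [DecidableEq D] (hD : 2 ≤ Fintype.card D)
    (Φ : Set (CFun D))
    (hcons : ∀ u : D → ℝ≥0∞, (⟨1, fun x => u (x 0)⟩ : CFun D) ∈ Φ)
    (k : ℕ) (hk : 1 ≤ k)
    (a b : Fin (2 * k + 1) → D) (hab : ∀ i, a i ≠ b i)
    (g : Fin (2 * k + 1) → (Fin 2 → D) → ℝ≥0∞)
    (hg : ∀ i, InVClone Φ (g i))
    (hfin : ∀ i : Fin (2 * k + 1), {x : Fin 2 → D | g i x ≠ ⊤} =
      {![a i, a (i + 1)], ![b i, a (i + 1)], ![a i, b (i + 1)]}) :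
    ¬ WeaklySubmodular Φ :=
  not_weaklySubmodular_of_oddCycle_general Φ hcons k a b hab g hg hfin
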